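/- Let Ω be a countably infinite set. The unique maximal subsemigroup of V ∩ S_{2,5} containing S_{1,2,3,4,5} is S_{1,2,4,5}; that is, a subsemigroup M of Ω^Ω with S_{1,2,3,4,5} ⊆ M ⊊ V ∩ S_{2,5} is maximal in V ∩ S_{2,5} (no subsemigroup T satisfies M ⊊ T ⊊ V ∩ S_{2,5}) if and only if M = S_{1,2,4,5}. -/

import Mathlib

/-!
Setting: `Ω` is a countably infinite set, `Function.End Ω = Ω → Ω` is the full
transformation semigroup (a subset is closed under composition in one order iff
it is closed in the other, so the lattice of subsemigroups is unaffected by the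
left-to-right convention of the paper).
-/

open Cardinal

/-- A transversal of `f`: a set on which `f` is injective and whose image is all of `Ωf`. -/
def IsTransversal {Ω : Type*} (f : Ω → Ω) (T : Set Ω) : Prop :=
  Set.InjOn f T ∧ f '' T = Set.range f

/-- The defect `d(f) = |Ω \ Ωf|`. -/
noncomputable def defect {Ω : Type*} (f : Ω → Ω) : Cardinal :=
  #((Set.range f)ᶜ : Set Ω)

/-- The collapse `c(f) = |Ω \ Σ|` for a transversal `Σ` of `f` (the value is
independent of the choice of transversal, so the infimum is the common value). -/
noncomputable def collapse {Ω : Type*} (f : Ω → Ω) : Cardinal :=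
  ⨅ T : {T : Set Ω // IsTransversal f T}, #(T.1ᶜ : Set Ω)

/-- The infinite contraction index `k(f) = |{α : αf⁻¹ infinite}|`. -/
noncomputable def contract {Ω : Type*} (f : Ω → Ω) : Cardinal :=
  #({α : Ω | (f ⁻¹' {α}).Infinite} : Set Ω)

def S1 {Ω : Type*} : Set (Function.End Ω) := {f | collapse f = 0 ∨ 0 < defect f}
def S2 {Ω : Type*} : Set (Function.End Ω) := {f | 0 < collapse f ∨ defect f = 0}
def S3 {Ω : Type*} : Set (Function.End Ω) := {f | collapse f < ℵ₀ ∨ ℵ₀ ≤ defect f}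
def S4 {Ω : Type*} : Set (Function.End Ω) := {f | ℵ₀ ≤ collapse f ∨ defect f < ℵ₀}
def S5 {Ω : Type*} : Set (Function.End Ω) := {f | contract f < ℵ₀}

/-- `Sym(Ω)`, the bijections of `Ω`. -/
def SymOmega {Ω : Type*} : Set (Function.End Ω) := {f | Function.Bijective f}

/-- `U = {f : d(f) = ∞ or 0 < c(f) < ∞} ∪ Sym(Ω)`. -/
def SetU {Ω : Type*} : Set (Function.End Ω) :=
  {f | ℵ₀ ≤ defect f ∨ (0 < collapse f ∧ collapse f < ℵ₀)} ∪ SymOmega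

/-- `V = {f : c(f) = ∞ or 0 < d(f) < ∞} ∪ Sym(Ω)`. -/
def SetV {Ω : Type*} : Set (Function.End Ω) :=
  {f | ℵ₀ ≤ collapse f ∨ (0 < defect f ∧ defect f < ℵ₀)} ∪ SymOmega

/-- `S_{1,2,3,4,5}`. -/
def S12345 {Ω : Type*} : Set (Function.End Ω) := S1 ∩ S2 ∩ S3 ∩ S4 ∩ S5

/-- The family `S_1, …, S_5` indexed by `Fin 5`. -/
def SS {Ω : Type*} : Fin 5 → Set (Function.End Ω) := ![S1, S2, S3, S4, S5]

/-!
Write `W = V ∩ S_{2,5}` and `N = S_{1,2,4,5}`. An element of `W` outside `S_{1,2,3,4,5}` has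
infinite collapse, and an element `m` of `W` outside `N` is moreover surjective. For such `m`
and any `g ∈ W \ S_{1,2,3,4,5}`, composing `g` with a section `s` of `m` gives `e = s ∘ g`
with infinite defect (it misses the complement of the transversal `range s`), infinite collapse
and finitely many infinite fibres, so `e ∈ S_{1,2,3,4,5}` and `g = m ∘ e`. Hence every
subsemigroup containing `S_{1,2,3,4,5}` and meeting `W \ N` contains all of `W`; since `N` is a
subsemigroup of `W` and `W \ N` is nonempty (a two-to-one surjection lies in it), `N` is the
only maximal one.
-/

open Cardinal Set Function

section Transformations

variable {Ω : Type*}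

theorem Set.InjOn.exists_isTransversal_superset {f : Ω → Ω} {T : Set Ω} (hT : InjOn f T) :
    ∃ T', T ⊆ T' ∧ IsTransversal f T' := by
  obtain ⟨T', hTT', -, himage, hinj⟩ := hT.exists_subset_injOn_subset_range_eq (subset_univ T)
  exact ⟨T', hTT', hinj, himage.trans image_univ⟩

instance (f : Ω → Ω) : Nonempty {T : Set Ω // IsTransversal f T} :=
  let ⟨T, _, hT⟩ := (injOn_empty f).exists_isTransversal_superset
  ⟨⟨T, hT⟩⟩

theorem collapse_le {f : Ω → Ω} {T : Set Ω} (hT : IsTransversal f T) :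
    collapse f ≤ #(Tᶜ : Set Ω) :=
  ciInf_le (OrderBot.bddBelow _) (⟨T, hT⟩ : {T : Set Ω // IsTransversal f T})

theorem exists_isTransversal_collapse_eq (f : Ω → Ω) :
    ∃ T, IsTransversal f T ∧ collapse f = #(Tᶜ : Set Ω) := by
  obtain ⟨⟨T, hT⟩, h⟩ :=
    ciInf_mem fun T : {T : Set Ω // IsTransversal f T} => #(T.1ᶜ : Set Ω)
  exact ⟨T, hT, h.symm⟩

theorem collapse_eq_zero_iff {f : Ω → Ω} : collapse f = 0 ↔ Injective f := by
  refine ⟨fun h => ?_, fun h => le_zero_iff.1 ?_⟩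
  · obtain ⟨T, hT, hc⟩ := exists_isTransversal_collapse_eq f
    rw [h, eq_comm, mk_eq_zero_iff, isEmpty_coe_sort, compl_empty_iff] at hc
    exact injOn_univ.1 (hc ▸ hT.1)
  · simpa using collapse_le (f := f) ⟨h.injOn, image_univ⟩

theorem defect_eq_zero_iff {f : Ω → Ω} : defect f = 0 ↔ Surjective f := by
  rw [defect, mk_eq_zero_iff, isEmpty_coe_sort, compl_empty_iff, range_eq_univ]

theorem collapse_le_collapse_comp (f g : Ω → Ω) : collapse g ≤ collapse (f ∘ g) := by
  obtain ⟨T, hT, hc⟩ := exists_isTransversal_collapse_eq (f ∘ g)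
  obtain ⟨T', hTT', hT'⟩ := hT.1.of_comp.exists_isTransversal_superset
  exact hc ▸ (collapse_le hT').trans (mk_le_mk_of_subset (compl_subset_compl.2 hTT'))

/-- A transversal `T` of `f ∘ g` maps under `g` onto a partial transversal of `f`, which extends
to a transversal whose complement lies in `(range g)ᶜ ∪ g '' Tᶜ`. -/
theorem collapse_le_defect_add_collapse_comp (f g : Ω → Ω) :
    collapse f ≤ defect g + collapse (f ∘ g) := by
  obtain ⟨T, hT, hc⟩ := exists_isTransversal_collapse_eq (f ∘ g)
  have hinj : InjOn f (g '' T) := by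
    rintro - ⟨x, hx, rfl⟩ - ⟨y, hy, rfl⟩ hxy
    rw [hT.1 hx hy hxy]
  obtain ⟨T', hgT, hT'⟩ := hinj.exists_isTransversal_superset
  have hcompl : T'ᶜ ⊆ (range g)ᶜ ∪ g '' Tᶜ := by
    intro x hx
    rcases em (x ∈ range g) with ⟨y, rfl⟩ | h
    · exact Or.inr ⟨y, fun hy => hx (hgT ⟨y, hy, rfl⟩), rfl⟩
    · exact Or.inl h
  calc collapse f ≤ #(T'ᶜ : Set Ω) := collapse_le hT'
    _ ≤ #((range g)ᶜ ∪ g '' Tᶜ : Set Ω) := mk_le_mk_of_subset hcompl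
    _ ≤ defect g + #(g '' Tᶜ : Set Ω) := mk_union_le _ _
    _ ≤ defect g + collapse (f ∘ g) := hc ▸ add_le_add le_rfl mk_image_le

theorem defect_comp_le (f g : Ω → Ω) : defect (f ∘ g) ≤ defect f + defect g := by
  have hcompl : (range (f ∘ g))ᶜ ⊆ (range f)ᶜ ∪ f '' (range g)ᶜ := by
    intro x hx
    rcases em (x ∈ range f) with ⟨y, rfl⟩ | h
    · exact Or.inr ⟨y, fun ⟨z, hz⟩ => hx ⟨z, by simp [hz]⟩, rfl⟩
    · exact Or.inl h
  calc defect (f ∘ g) ≤ #((range f)ᶜ ∪ f '' (range g)ᶜ : Set Ω) :=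
        mk_le_mk_of_subset hcompl
    _ ≤ defect f + #(f '' (range g)ᶜ : Set Ω) := mk_union_le _ _
    _ ≤ defect f + defect g := add_le_add le_rfl mk_image_le

theorem defect_le_defect_comp (f g : Ω → Ω) : defect f ≤ defect (f ∘ g) :=
  mk_le_mk_of_subset (compl_subset_compl.2 (range_comp_subset_range g f))

theorem collapse_le_defect_of_leftInverse {m s : Ω → Ω} (h : LeftInverse m s) :
    collapse m ≤ defect s := by
  refine collapse_le ⟨?_, ?_⟩
  · rintro _ ⟨x, rfl⟩ _ ⟨y, rfl⟩ hxy
    rw [h x, h y] at hxy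
    rw [hxy]
  · rw [← range_comp, h.comp_eq_id, range_id, h.surjective.range_eq]

theorem contract_comp_le (f g : Ω → Ω) : contract (f ∘ g) ≤ contract f + contract g := by
  have hsub : {a | ((f ∘ g) ⁻¹' {a}).Infinite} ⊆
      {a | (f ⁻¹' {a}).Infinite} ∪ f '' {b | (g ⁻¹' {b}).Infinite} := by
    intro a ha
    rcases em (f ⁻¹' {a}).Infinite with hf | hf
    · exact Or.inl hf
    have hfib : (f ∘ g) ⁻¹' {a} = ⋃ b ∈ f ⁻¹' {a}, g ⁻¹' {b} := by
      ext x
      simp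
    obtain ⟨b, hb, hg⟩ : ∃ b ∈ f ⁻¹' {a}, (g ⁻¹' {b}).Infinite := by
      by_contra! h
      exact ha (hfib ▸ (not_infinite.1 hf).biUnion h)
    exact Or.inr ⟨b, hg, hb⟩
  calc contract (f ∘ g)
      ≤ #({a | (f ⁻¹' {a}).Infinite} ∪ f '' {b | (g ⁻¹' {b}).Infinite} : Set Ω) :=
        mk_le_mk_of_subset hsub
    _ ≤ contract f + #(f '' {b | (g ⁻¹' {b}).Infinite} : Set Ω) := mk_union_le _ _
    _ ≤ contract f + contract g := add_le_add le_rfl mk_image_le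

theorem contract_eq_zero {f : Ω → Ω} (h : ∀ a, (f ⁻¹' {a}).Finite) : contract f = 0 := by
  simp [contract, h]

theorem mk_le_collapse_fst_comp (φ : Ω ≃ Ω × Bool) : #Ω ≤ collapse (Prod.fst ∘ φ) := by
  obtain ⟨T, hT, hc⟩ := exists_isTransversal_collapse_eq (Prod.fst ∘ φ)
  have hpair : ∀ a, φ.symm (a, false) ∈ T → φ.symm (a, true) ∉ T := fun a h₁ h₂ => by
    simpa using congrArg (fun x => (φ x).2) (hT.1 h₁ h₂ (by simp))
  classical
  let F : Ω → (Tᶜ : Set Ω) := fun a =>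
    if h : φ.symm (a, false) ∈ T then ⟨φ.symm (a, true), hpair a h⟩
    else ⟨φ.symm (a, false), h⟩
  have hF : ∀ a, (φ (F a)).1 = a := fun a => by
    unfold F
    split_ifs <;> simp
  exact hc ▸ mk_le_of_injective (f := F) fun a b hab => (hF a).symm.trans (hab ▸ hF b)

end Transformations

section Semigroups

variable {Ω : Type*}

theorem mem_S1_iff {f : Function.End Ω} : f ∈ S1 ↔ (Surjective f → Injective f) :=
  (or_congr collapse_eq_zero_iff (pos_iff_ne_zero.trans (not_congr defect_eq_zero_iff))).trans
    (or_comm.trans imp_iff_not_or.symm)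

theorem mem_S2_iff {f : Function.End Ω} : f ∈ S2 ↔ (Injective f → Surjective f) :=
  (or_congr (pos_iff_ne_zero.trans (not_congr collapse_eq_zero_iff)) defect_eq_zero_iff).trans
    imp_iff_not_or.symm

theorem mem_S4_iff {f : Function.End Ω} :
    f ∈ S4 ↔ (collapse f < ℵ₀ → defect f < ℵ₀) :=
  (or_congr_left not_lt.symm).trans imp_iff_not_or.symm

theorem mul_mem_S1 {f g : Function.End Ω} (hf : f ∈ S1) (hg : g ∈ S1) : f * g ∈ S1 := by
  refine mem_S1_iff.2 fun hfg => ?_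
  have hf_inj : Injective f := mem_S1_iff.1 hf hfg.of_comp
  have hg_surj : Surjective g := fun x => (hfg (f x)).imp fun _ h => hf_inj h
  exact hf_inj.comp (mem_S1_iff.1 hg hg_surj)

theorem mul_mem_S2 {f g : Function.End Ω} (hf : f ∈ S2) (hg : g ∈ S2) : f * g ∈ S2 := by
  refine mem_S2_iff.2 fun hfg => ?_
  have hg_surj : Surjective g := mem_S2_iff.1 hg hfg.of_comp
  have hf_inj : Injective f := by
    intro x y hxy
    obtain ⟨a, rfl⟩ := hg_surj x
    obtain ⟨b, rfl⟩ := hg_surj y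
    rw [hfg hxy]
  exact (mem_S2_iff.1 hf hf_inj).comp hg_surj

theorem mul_mem_S4 {f g : Function.End Ω} (hf : f ∈ S4) (hg : g ∈ S4) : f * g ∈ S4 := by
  refine mem_S4_iff.2 fun hfg => ?_
  have hg_defect : defect g < ℵ₀ :=
    mem_S4_iff.1 hg ((collapse_le_collapse_comp f g).trans_lt hfg)
  have hf_defect : defect f < ℵ₀ := mem_S4_iff.1 hf
    ((collapse_le_defect_add_collapse_comp f g).trans_lt (add_lt_aleph0 hg_defect hfg))
  exact (defect_comp_le f g).trans_lt (add_lt_aleph0 hf_defect hg_defect)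

theorem mul_mem_S5 {f g : Function.End Ω} (hf : f ∈ S5) (hg : g ∈ S5) : f * g ∈ S5 :=
  (contract_comp_le f g).trans_lt (add_lt_aleph0 hf hg)

theorem mul_mem_S1245 {f g : Function.End Ω} (hf : f ∈ S1 ∩ S2 ∩ S4 ∩ S5)
    (hg : g ∈ S1 ∩ S2 ∩ S4 ∩ S5) : f * g ∈ S1 ∩ S2 ∩ S4 ∩ S5 :=
  ⟨⟨⟨mul_mem_S1 hf.1.1.1 hg.1.1.1, mul_mem_S2 hf.1.1.2 hg.1.1.2⟩,
    mul_mem_S4 hf.1.2 hg.1.2⟩, mul_mem_S5 hf.2 hg.2⟩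

theorem S12345_subset_S1245 : (S12345 : Set (Function.End Ω)) ⊆ S1 ∩ S2 ∩ S4 ∩ S5 :=
  fun _ ⟨⟨⟨⟨h1, h2⟩, _⟩, h4⟩, h5⟩ => ⟨⟨⟨h1, h2⟩, h4⟩, h5⟩

theorem S1245_subset_SetV_inter :
    (S1 ∩ S2 ∩ S4 ∩ S5 : Set (Function.End Ω)) ⊆ SetV ∩ (S2 ∩ S5) := by
  rintro f ⟨⟨⟨h1, h2⟩, h4⟩, h5⟩
  refine ⟨?_, h2, h5⟩
  rcases le_or_gt ℵ₀ (collapse f) with hc | hc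
  · exact Or.inl (Or.inl hc)
  rcases eq_or_ne (defect f) 0 with hd | hd
  · have hsurj := defect_eq_zero_iff.1 hd
    exact Or.inr ⟨mem_S1_iff.1 h1 hsurj, hsurj⟩
  · exact Or.inl (Or.inr ⟨pos_iff_ne_zero.2 hd, mem_S4_iff.1 h4 hc⟩)

theorem aleph0_le_collapse_of_notMem_S12345 {f : Function.End Ω} (hf : f ∈ SetV ∩ (S2 ∩ S5))
    (hf' : f ∉ S12345) : ℵ₀ ≤ collapse f := by
  obtain ⟨hV, h2, h5⟩ := hf
  by_contra! hc
  refine hf' ⟨⟨⟨⟨?_, h2⟩, Or.inl hc⟩, mem_S4_iff.2 fun _ => ?_⟩, h5⟩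
  · rcases hV with (hc' | ⟨hd, -⟩) | hbij
    · exact absurd hc' hc.not_ge
    · exact Or.inr hd
    · exact mem_S1_iff.2 fun _ => hbij.1
  · rcases hV with (hc' | ⟨-, hd⟩) | hbij
    · exact absurd hc' hc.not_ge
    · exact hd
    · exact defect_eq_zero_iff.2 hbij.2 ▸ aleph0_pos

theorem surjective_of_notMem_S1245 {f : Function.End Ω} (hf : f ∈ SetV ∩ (S2 ∩ S5))
    (hf' : f ∉ S1 ∩ S2 ∩ S4 ∩ S5) : Surjective f ∧ ℵ₀ ≤ collapse f := by
  have hc := aleph0_le_collapse_of_notMem_S12345 hf fun h => hf' (S12345_subset_S1245 h)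
  have h1 : f ∉ S1 := fun h1 => hf' ⟨⟨⟨h1, hf.2.1⟩, Or.inl hc⟩, hf.2.2⟩
  rw [mem_S1_iff, Classical.not_imp] at h1
  exact ⟨h1.1, hc⟩

theorem mem_S12345_of_aleph0_le {e : Function.End Ω} (hd : ℵ₀ ≤ defect e)
    (hc : ℵ₀ ≤ collapse e) (hk : contract e < ℵ₀) : e ∈ S12345 :=
  ⟨⟨⟨⟨Or.inr (aleph0_pos.trans_le hd), Or.inl (aleph0_pos.trans_le hc)⟩, Or.inr hd⟩,
    Or.inl hc⟩, hk⟩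

theorem exists_mem_S12345_mul_eq {m g : Function.End Ω} (hm : Surjective m)
    (hm_collapse : ℵ₀ ≤ collapse m) (hg_collapse : ℵ₀ ≤ collapse g) (hg : g ∈ S5) :
    ∃ e ∈ S12345, m * e = g := by
  have hs : LeftInverse m (surjInv hm) := rightInverse_surjInv hm
  refine ⟨surjInv hm ∘ g, mem_S12345_of_aleph0_le ?_ ?_ ?_, funext fun x => hs (g x)⟩
  · exact hm_collapse.trans ((collapse_le_defect_of_leftInverse hs).trans
      (defect_le_defect_comp _ g))
  · exact hg_collapse.trans (collapse_le_collapse_comp _ g)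
  · refine (contract_comp_le _ g).trans_lt ?_
    rwa [contract_eq_zero fun a => (finite_singleton a).preimage (injective_surjInv hm).injOn,
      zero_add]

theorem SetV_inter_subset_of_notMem_S1245 {P : Set (Function.End Ω)}
    (hP : ∀ a ∈ P, ∀ b ∈ P, a * b ∈ P) (hP_sub : S12345 ⊆ P) {m : Function.End Ω}
    (hmP : m ∈ P) (hm : m ∈ SetV ∩ (S2 ∩ S5)) (hm' : m ∉ S1 ∩ S2 ∩ S4 ∩ S5) :
    SetV ∩ (S2 ∩ S5) ⊆ P := by
  obtain ⟨hm_surj, hm_collapse⟩ := surjective_of_notMem_S1245 hm hm'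
  intro g hg
  by_cases hg' : g ∈ S12345
  · exact hP_sub hg'
  obtain ⟨e, he, rfl⟩ := exists_mem_S12345_mul_eq hm_surj hm_collapse
    (aleph0_le_collapse_of_notMem_S12345 hg hg') hg.2.2
  exact hP m hmP e (hP_sub he)

theorem exists_mem_SetV_inter_notMem_S1245 (Ω : Type*) [Infinite Ω] :
    ∃ u ∈ (SetV ∩ (S2 ∩ S5) : Set (Function.End Ω)), u ∉ S1 ∩ S2 ∩ S4 ∩ S5 := by
  obtain ⟨φ⟩ : Nonempty (Ω ≃ Ω × Bool) := by simp [← Cardinal.eq, mul_two]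
  have hc : ℵ₀ ≤ collapse (Prod.fst ∘ φ) :=
    (aleph0_le_mk Ω).trans (mk_le_collapse_fst_comp φ)
  have hsurj : Surjective (Prod.fst ∘ φ) := Prod.fst_surjective.comp φ.surjective
  refine ⟨Prod.fst ∘ φ, ⟨Or.inl (Or.inl hc), Or.inl (aleph0_pos.trans_le hc), ?_⟩, ?_⟩
  · show contract (Prod.fst ∘ φ) < ℵ₀
    refine contract_eq_zero (fun a => ?_) ▸ aleph0_pos
    have hfib : (Prod.fst ⁻¹' {a} : Set (Ω × Bool)).Finite :=
      (finite_range fun b : Bool => (a, b)).subset fun p (hp : p.1 = a) =>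
        ⟨p.2, by simp [← hp]⟩
    exact hfib.preimage (f := φ) φ.injective.injOn
  · rintro ⟨⟨⟨h1, -⟩, -⟩, -⟩
    have hinj : Injective (Prod.fst ∘ φ) := mem_S1_iff.1 h1 hsurj
    exact aleph0_ne_zero (le_zero_iff.1 (hc.trans_eq (collapse_eq_zero_iff.2 hinj)))

end Semigroups

theorem maximal_iff_eq_of_absorbing {α : Type*} {closed : Set α → Prop} {S N W M : Set α}
    (hN : closed N) (hNW : N ⊂ W)
    (habsorb : ∀ P, closed P → S ⊆ P → ∀ m ∈ P, m ∈ W → m ∉ N → W ⊆ P)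
    (hM : closed M) (hSM : S ⊆ M) (hMW : M ⊂ W) :
    (¬ ∃ T, closed T ∧ M ⊂ T ∧ T ⊂ W) ↔ M = N := by
  have hMN : M ⊆ N := fun m hm =>
    by_contra fun hmN => hMW.2 (habsorb M hM hSM m hm (hMW.1 hm) hmN)
  constructor
  · intro hmax
    by_contra hne
    exact hmax ⟨N, hN, hMN.ssubset_of_ne hne, hNW⟩
  · rintro rfl ⟨T, hT, hMT, hTW⟩
    obtain ⟨t, htT, htM⟩ := exists_of_ssubset hMT
    exact hTW.2 (habsorb T hT (hSM.trans hMT.1) t htT (hTW.1 htT) htM)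

theorem stmt18_general (Ω : Type) [Infinite Ω] (M : Set (Function.End Ω))
    (hM : ∀ a ∈ M, ∀ b ∈ M, a * b ∈ M)
    (hsub : S12345 ⊆ M) (hlt : M ⊂ SetV ∩ (S2 ∩ S5)) :
    (¬ ∃ T : Set (Function.End Ω),
        (∀ a ∈ T, ∀ b ∈ T, a * b ∈ T) ∧ M ⊂ T ∧ T ⊂ SetV ∩ (S2 ∩ S5)) ↔
      M = S1 ∩ S2 ∩ S4 ∩ S5 := by
  obtain ⟨u, hu, hu'⟩ := exists_mem_SetV_inter_notMem_S1245 Ω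
  exact maximal_iff_eq_of_absorbing (fun _ ha _ hb => mul_mem_S1245 ha hb)
    ⟨S1245_subset_SetV_inter, fun h => hu' (h hu)⟩
    (fun _ hP hP_sub _ hmP hm hm' => SetV_inter_subset_of_notMem_S1245 hP hP_sub hmP hm hm')
    hM hsub hlt

/-- The unique maximal subsemigroup of `V ∩ S_{2,5}` containing `S_{1,2,3,4,5}`
is `S_{1,2,4,5}`. -/
theorem stmt18 (Ω : Type) [Countable Ω] [Infinite Ω] (M : Set (Function.End Ω))
    (hM : ∀ a ∈ M, ∀ b ∈ M, a * b ∈ M)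
    (hsub : S12345 ⊆ M) (hlt : M ⊂ SetV ∩ (S2 ∩ S5)) :
    (¬ ∃ T : Set (Function.End Ω),
        (∀ a ∈ T, ∀ b ∈ T, a * b ∈ T) ∧ M ⊂ T ∧ T ⊂ SetV ∩ (S2 ∩ S5)) ↔
      M = S1 ∩ S2 ∩ S4 ∩ S5 :=
  stmt18_general Ω M hM hsub hlt
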